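/- arXiv:2503.14116 — 2 statements merged into one kernel-verified Lean document; each statement's English description precedes it below -/
import Mathlib

section
/- Let A_ρ ⊆ M_n(ℂ) be a structural matrix algebra that has a central class consisting of a single element. Then there exists an injective map φ : A_ρ → A_ρ satisfying both φ(XY) = φ(X)φ(Y) and φ(XY + YX) = φ(X)φ(Y) + φ(Y)φ(X) for all X, Y ∈ A_ρ, which is not additive. -/
/-!
Every `X ∈ A_ρ` vanishes off the diagonal in the row and column of the singleton central class
`{i}`, so `X ↦ X` with `X i i` replaced by `f (X i i)` is multiplicative for every multiplicative
`f : ℂ → ℂ`, and Jordan multiplicative as soon as `f 2 = 2`. An injective such `f` that is not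
additive is `z ↦ exp (c (log ‖z‖) * log 2) * z`, where `c : ℝ → ℚ` is `ℚ`-linear with
`c (log 2) = 0` and `c (log 3) ≠ 0`; this `c` exists because `2 ^ a ≠ 3 ^ b`, and then
`f 1 + f 2 = 3 ≠ f 3`.
-/

/-- The structural matrix algebra determined by a quasi-order `ρ` on `Fin n`. -/
def structuralMatrixAlgebra {n : ℕ} (ρ : Fin n → Fin n → Prop) :
    Set (Matrix (Fin n) (Fin n) ℂ) :=
  {X | ∀ i j, ¬ ρ i j → X i j = 0}

/-- The equivalence relation `≈` whose classes are the central classes of `A_ρ`: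
the reflexive-transitive closure of `i ≈₀ j ⟺ (i,j) ∈ ρ ∨ (j,i) ∈ ρ`. -/
def centralRel {n : ℕ} (ρ : Fin n → Fin n → Prop) : Fin n → Fin n → Prop :=
  Relation.ReflTransGen (fun a b => ρ a b ∨ ρ b a)

noncomputable def normTwist (e : ℝ →+ ℝ) : ℂ →*₀ ℂ where
  toFun z := (Real.exp (e (Real.log ‖z‖)) : ℂ) * z
  map_zero' := mul_zero _
  map_one' := by simp
  map_mul' z w := by
    rcases eq_or_ne z 0 with rfl | hz
    · simp
    rcases eq_or_ne w 0 with rfl | hw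
    · simp
    rw [norm_mul, Real.log_mul (norm_ne_zero_iff.2 hz) (norm_ne_zero_iff.2 hw), map_add,
      Real.exp_add]
    push_cast
    ring

theorem normTwist_apply (e : ℝ →+ ℝ) (z : ℂ) :
    normTwist e z = (Real.exp (e (Real.log ‖z‖)) : ℂ) * z := rfl

-- For `z ≠ 0`, `log ‖normTwist e z‖ = log ‖z‖ + e (log ‖z‖)`, so `he` recovers `‖z‖`.
theorem normTwist_injective {e : ℝ →+ ℝ} (he : Function.Injective fun t => t + e t) :
    Function.Injective (normTwist e) := by
  intro z w h
  rcases eq_or_ne z 0 with rfl | hz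
  · simp_all [normTwist_apply]
  rcases eq_or_ne w 0 with rfl | hw
  · simp_all [normTwist_apply]
  have hnorm : ‖z‖ = ‖w‖ := by
    have := congrArg (fun u => Real.log ‖u‖) h
    simp only [normTwist_apply, norm_mul, Complex.norm_real, Real.norm_eq_abs, Real.abs_exp] at this
    rw [Real.log_mul (Real.exp_ne_zero _) (norm_ne_zero_iff.2 hz),
      Real.log_mul (Real.exp_ne_zero _) (norm_ne_zero_iff.2 hw), Real.log_exp, Real.log_exp,
      add_comm, add_comm (e _)] at this
    exact Real.log_injOn_pos (norm_pos_iff.2 hz) (norm_pos_iff.2 hw) (he this)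
  rw [normTwist_apply, normTwist_apply, hnorm] at h
  exact mul_left_cancel₀ (by exact_mod_cast (Real.exp_ne_zero _)) h

theorem normTwist_natCast_eq_self_iff (e : ℝ →+ ℝ) {m : ℕ} (hm : m ≠ 0) :
    normTwist e m = m ↔ e (Real.log m) = 0 := by
  rw [normTwist_apply, Complex.norm_natCast, mul_eq_right₀ (Nat.cast_ne_zero.2 hm),
    Complex.ofReal_eq_one, Real.exp_eq_one_iff]

theorem two_pow_ne_three_pow {a : ℕ} (ha : a ≠ 0) (b : ℕ) : 2 ^ a ≠ 3 ^ b := by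
  intro h
  have h2 : Even (2 ^ a) := (Nat.even_pow' ha).2 even_two
  rw [h] at h2
  exact Nat.not_even_iff_odd.2 (Odd.pow (by decide)) h2

theorem log_three_notMem_span_log_two : Real.log 3 ∉ (ℚ ∙ Real.log 2) := by
  intro h
  obtain ⟨q, hq⟩ := Submodule.mem_span_singleton.1 h
  rw [Rat.smul_def] at hq
  have hq_pos : 0 < q := by
    have : (0 : ℝ) < q * Real.log 2 := hq ▸ Real.log_pos (by norm_num)
    exact_mod_cast pos_of_mul_pos_left this (Real.log_pos (by norm_num)).le
  obtain ⟨a, ha⟩ := Int.eq_ofNat_of_zero_le (Rat.num_pos.2 hq_pos).le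
  have hlog : Real.log ((2 : ℝ) ^ a) = Real.log ((3 : ℝ) ^ q.den) := by
    rw [Real.log_pow, Real.log_pow, ← hq, Rat.cast_def, ha]
    field_simp
    push_cast
    ring
  have hpow : (2 : ℝ) ^ a = 3 ^ q.den :=
    Real.log_injOn_pos (Set.mem_Ioi.2 (by positivity)) (Set.mem_Ioi.2 (by positivity)) hlog
  refine two_pow_ne_three_pow (a := a) ?_ q.den (by exact_mod_cast hpow)
  rintro rfl
  exact (Rat.num_pos.2 hq_pos).ne' ha

theorem exists_injective_monoidWithZeroHom_map_two_map_three :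
    ∃ f : ℂ →*₀ ℂ, Function.Injective f ∧ f 2 = 2 ∧ f 3 ≠ 3 := by
  obtain ⟨c, hc3, hc⟩ :=
    Submodule.exists_dual_map_eq_bot_of_notMem log_three_notMem_span_log_two inferInstance
  have hc2 : c (Real.log 2) = 0 := by
    have := Submodule.mem_map_of_mem (f := c) (Submodule.mem_span_singleton_self (Real.log 2))
    rwa [hc, Submodule.mem_bot] at this
  let e : ℝ →+ ℝ :=
    AddMonoidHom.mk' (fun t => (c t : ℝ) * Real.log 2) fun s t => by simp [add_mul]
  have hce : ∀ t, c (e t) = 0 := fun t => by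
    simp [e, ← Rat.smul_def, hc2]
  refine ⟨normTwist e, normTwist_injective fun s t hst => ?_, ?_, ?_⟩
  · have : c s = c t := by simpa [hce] using congrArg c hst
    simpa [e, this] using hst
  · exact_mod_cast (normTwist_natCast_eq_self_iff e two_ne_zero).2 (by simp [e, hc2])
  · have := (normTwist_natCast_eq_self_iff e three_ne_zero).not.2 <|
      mul_ne_zero (Rat.cast_ne_zero.2 hc3) (Real.log_pos one_lt_two).ne'
    exact_mod_cast this

namespace Matrix

variable {ι R : Type*} [DecidableEq ι]

def IsIsolatedAt [Zero R] (i : ι) (X : Matrix ι ι R) : Prop :=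
  ∀ j, j ≠ i → X i j = 0 ∧ X j i = 0

def updateDiagEntry [AddCommGroup R] (X : Matrix ι ι R) (i : ι) (c : R) : Matrix ι ι R :=
  X + single i i (c - X i i)

def mapDiagEntry [AddCommGroup R] (X : Matrix ι ι R) (i : ι) (f : R → R) : Matrix ι ι R :=
  X.updateDiagEntry i (f (X i i))

section AddCommGroup

variable [AddCommGroup R] {i : ι}

theorem updateDiagEntry_apply_same (X : Matrix ι ι R) (i : ι) (c : R) :
    X.updateDiagEntry i c i i = c := by
  simp [updateDiagEntry]

theorem updateDiagEntry_apply_of_ne (X : Matrix ι ι R) (c : R) {j k : ι}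
    (h : ¬(i = j ∧ i = k)) : X.updateDiagEntry i c j k = X j k := by
  simp [updateDiagEntry, single_apply_of_ne _ _ _ _ _ h]

theorem updateDiagEntry_add_updateDiagEntry (X Y : Matrix ι ι R) (i : ι) (a b : R) :
    X.updateDiagEntry i a + Y.updateDiagEntry i b = (X + Y).updateDiagEntry i (a + b) := by
  ext j k
  by_cases h : i = j ∧ i = k
  · obtain ⟨rfl, rfl⟩ := h
    simp [updateDiagEntry_apply_same]
  · simp [updateDiagEntry_apply_of_ne _ _ h]

theorem single_updateDiagEntry (i : ι) (a c : R) :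
    (single i i a).updateDiagEntry i c = single i i c := by
  rw [updateDiagEntry, single_apply_same, ← single_add, add_sub_cancel]

theorem mapDiagEntry_injective {f : R → R} (hf : Function.Injective f) (i : ι) :
    Function.Injective fun X : Matrix ι ι R => X.mapDiagEntry i f := by
  intro X Y h
  have hii : X i i = Y i i := hf <| by
    simpa only [mapDiagEntry, updateDiagEntry_apply_same] using congrFun (congrFun h i) i
  ext j k
  by_cases hjk : i = j ∧ i = k
  · obtain ⟨rfl, rfl⟩ := hjk
    exact hii
  · simpa only [mapDiagEntry, updateDiagEntry_apply_of_ne _ _ hjk] using congrFun (congrFun h j) k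

theorem single_mapDiagEntry (i : ι) (a : R) (f : R → R) :
    (single i i a).mapDiagEntry i f = single i i (f a) := by
  rw [mapDiagEntry, single_apply_same, single_updateDiagEntry]

end AddCommGroup

section Ring

variable [Fintype ι] [Ring R] {X Y : Matrix ι ι R} {i : ι}

theorem IsIsolatedAt.mul_single (hX : X.IsIsolatedAt i) (c : R) :
    X * single i i c = single i i (X i i * c) := by
  ext j k
  by_cases hk : k = i
  · subst hk
    rw [mul_single_apply_same]
    by_cases hj : j = k
    · rw [hj, single_apply_same]
    · rw [(hX j hj).2, zero_mul, single_apply_of_row_ne (Ne.symm hj)]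
  · rw [mul_single_apply_of_ne _ _ _ _ _ hk, single_apply_of_col_ne _ _ (Ne.symm hk)]

theorem IsIsolatedAt.single_mul (hY : Y.IsIsolatedAt i) (c : R) :
    single i i c * Y = single i i (c * Y i i) := by
  ext j k
  by_cases hj : j = i
  · subst hj
    rw [single_mul_apply_same]
    by_cases hk : k = j
    · rw [hk, single_apply_same]
    · rw [(hY k hk).1, mul_zero, single_apply_of_col_ne _ _ (Ne.symm hk)]
  · rw [single_mul_apply_of_ne _ _ _ _ _ hj, single_apply_of_row_ne (Ne.symm hj)]

omit [DecidableEq ι] in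
theorem IsIsolatedAt.mul_apply_self (hX : X.IsIsolatedAt i) (Y : Matrix ι ι R) :
    (X * Y) i i = X i i * Y i i := by
  rw [mul_apply, Finset.sum_eq_single i (fun j _ hj => by rw [(hX j hj).1, zero_mul])
    (fun h => absurd (Finset.mem_univ i) h)]

theorem updateDiagEntry_mul_updateDiagEntry (hX : X.IsIsolatedAt i) (hY : Y.IsIsolatedAt i)
    (a b : R) :
    X.updateDiagEntry i a * Y.updateDiagEntry i b = (X * Y).updateDiagEntry i (a * b) := by
  simp only [updateDiagEntry, add_mul, mul_add, hX.mul_single, hY.single_mul,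
    single_mul_single_same, hX.mul_apply_self]
  rw [add_assoc, ← single_add, ← single_add]
  congr 2
  noncomm_ring

theorem mapDiagEntry_mul (hX : X.IsIsolatedAt i) (hY : Y.IsIsolatedAt i) (f : R →* R) :
    (X * Y).mapDiagEntry i f = X.mapDiagEntry i f * Y.mapDiagEntry i f := by
  rw [mapDiagEntry, mapDiagEntry, mapDiagEntry, updateDiagEntry_mul_updateDiagEntry hX hY,
    hX.mul_apply_self, map_mul]

end Ring

theorem mapDiagEntry_mul_add_mul [Fintype ι] [CommRing R] {X Y : Matrix ι ι R} {i : ι}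
    (hX : X.IsIsolatedAt i) (hY : Y.IsIsolatedAt i) {f : R →* R} (hf : f 2 = 2) :
    (X * Y + Y * X).mapDiagEntry i f =
      X.mapDiagEntry i f * Y.mapDiagEntry i f + Y.mapDiagEntry i f * X.mapDiagEntry i f := by
  rw [← mapDiagEntry_mul hX hY, ← mapDiagEntry_mul hY hX, mapDiagEntry, mapDiagEntry,
    mapDiagEntry, updateDiagEntry_add_updateDiagEntry, add_apply, hX.mul_apply_self,
    hY.mul_apply_self, mul_comm (Y i i), ← two_mul, map_mul, hf, map_mul, two_mul]

end Matrix

section StructuralMatrixAlgebra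

variable {n : ℕ} {ρ : Fin n → Fin n → Prop} {i : Fin n}

theorem updateDiagEntry_mem_structuralMatrixAlgebra (hi : ρ i i) {X : Matrix (Fin n) (Fin n) ℂ}
    (hX : X ∈ structuralMatrixAlgebra ρ) (c : ℂ) :
    X.updateDiagEntry i c ∈ structuralMatrixAlgebra ρ := by
  intro j k hjk
  have hne : ¬(i = j ∧ i = k) := by
    rintro ⟨rfl, rfl⟩
    exact hjk hi
  rw [Matrix.updateDiagEntry_apply_of_ne _ _ hne]
  exact hX j k hjk

theorem single_mem_structuralMatrixAlgebra (hi : ρ i i) (c : ℂ) :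
    Matrix.single i i c ∈ structuralMatrixAlgebra ρ := by
  intro j k hjk
  exact Matrix.single_apply_of_ne _ _ _ _ _ fun ⟨hij, hik⟩ => hjk (hij ▸ hik ▸ hi)

theorem isIsolatedAt_of_mem_structuralMatrixAlgebra (hi : ∀ j, centralRel ρ i j → j = i)
    {X : Matrix (Fin n) (Fin n) ℂ} (hX : X ∈ structuralMatrixAlgebra ρ) : X.IsIsolatedAt i :=
  fun j hj => ⟨hX i j fun h => hj (hi j (.single (.inl h))),
    hX j i fun h => hj (hi j (.single (.inr h)))⟩

end StructuralMatrixAlgebra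

theorem exists_nonadditive_multiplicative_map_general {n : ℕ} (ρ : Fin n → Fin n → Prop)
    (hrefl : ∀ i, ρ i i)
    (hclass : ∃ i : Fin n, ∀ j, centralRel ρ i j → j = i) :
    ∃ φ : Matrix (Fin n) (Fin n) ℂ → Matrix (Fin n) (Fin n) ℂ,
      (∀ X ∈ structuralMatrixAlgebra ρ, φ X ∈ structuralMatrixAlgebra ρ) ∧
      Set.InjOn φ (structuralMatrixAlgebra ρ) ∧
      (∀ X ∈ structuralMatrixAlgebra ρ, ∀ Y ∈ structuralMatrixAlgebra ρ,
        φ (X * Y) = φ X * φ Y) ∧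
      (∀ X ∈ structuralMatrixAlgebra ρ, ∀ Y ∈ structuralMatrixAlgebra ρ,
        φ (X * Y + Y * X) = φ X * φ Y + φ Y * φ X) ∧
      ∃ X ∈ structuralMatrixAlgebra ρ, ∃ Y ∈ structuralMatrixAlgebra ρ,
        φ (X + Y) ≠ φ X + φ Y := by
  obtain ⟨i, hi⟩ := hclass
  obtain ⟨f, hf_inj, hf2, hf3⟩ := exists_injective_monoidWithZeroHom_map_two_map_three
  have hiso := fun X (hX : X ∈ structuralMatrixAlgebra ρ) =>
    isIsolatedAt_of_mem_structuralMatrixAlgebra hi hX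
  refine ⟨fun X => X.mapDiagEntry i f,
    fun X hX => updateDiagEntry_mem_structuralMatrixAlgebra (hrefl i) hX _,
    (Matrix.mapDiagEntry_injective hf_inj i).injOn,
    fun X hX Y hY => Matrix.mapDiagEntry_mul (hiso X hX) (hiso Y hY) (f : ℂ →* ℂ),
    fun X hX Y hY => Matrix.mapDiagEntry_mul_add_mul (hiso X hX) (hiso Y hY) (f := f) hf2,
    Matrix.single i i 1, single_mem_structuralMatrixAlgebra (hrefl i) 1,
    Matrix.single i i 2, single_mem_structuralMatrixAlgebra (hrefl i) 2, fun h => hf3 ?_⟩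
  have := congrFun (congrFun h i) i
  simp only [← Matrix.single_add, Matrix.single_mapDiagEntry, Matrix.single_apply_same] at this
  rw [map_one, hf2] at this
  simpa only [show (1 : ℂ) + 2 = 3 by norm_num] using this

/-- If the structural matrix algebra `A_ρ` has a central class
consisting of a single element, then there exists an injective map
`φ : A_ρ → A_ρ` which is both multiplicative and Jordan multiplicative but not
additive. -/
theorem exists_nonadditive_multiplicative_map {n : ℕ} (ρ : Fin n → Fin n → Prop)
    (hrefl : ∀ i, ρ i i) (htrans : ∀ i j k, ρ i j → ρ j k → ρ i k)
    (hclass : ∃ i : Fin n, ∀ j, centralRel ρ i j → j = i) :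
    ∃ φ : Matrix (Fin n) (Fin n) ℂ → Matrix (Fin n) (Fin n) ℂ,
      (∀ X ∈ structuralMatrixAlgebra ρ, φ X ∈ structuralMatrixAlgebra ρ) ∧
      Set.InjOn φ (structuralMatrixAlgebra ρ) ∧
      (∀ X ∈ structuralMatrixAlgebra ρ, ∀ Y ∈ structuralMatrixAlgebra ρ,
        φ (X * Y) = φ X * φ Y) ∧
      (∀ X ∈ structuralMatrixAlgebra ρ, ∀ Y ∈ structuralMatrixAlgebra ρ,
        φ (X * Y + Y * X) = φ X * φ Y + φ Y * φ X) ∧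
      ∃ X ∈ structuralMatrixAlgebra ρ, ∃ Y ∈ structuralMatrixAlgebra ρ,
        φ (X + Y) ≠ φ X + φ Y :=
  exists_nonadditive_multiplicative_map_general ρ hrefl hclass
end

section
/- Let A_ρ ⊆ M_n(ℂ) be a structural matrix algebra such that every central class of A_ρ has at least 2 elements, and let φ : A_ρ → M_n(ℂ) be an injective map satisfying φ(XY) = φ(X)φ(Y) for all X, Y ∈ A_ρ. Then there exist an invertible matrix T ∈ M_n(ℂ), a transitive map g : ρ → ℂ^× (i.e. g(i,j)g(j,k) = g(i,k) whenever (i,j), (j,k) ∈ ρ), and for each central class C an injective ring homomorphism ω_C : ℂ → ℂ, such that for every X ∈ A_ρ, φ(X) = T M T⁻¹, where M ∈ M_n(ℂ) is the matrix with M_{ij} = g(i,j)·ω_{C(i)}(X_{ij}) for (i,j) ∈ ρ (C(i) denoting the central class containing i) and M_{ij} = 0 for (i,j) ∉ ρ. -/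
/-!
Since `φ 0` absorbs the whole image, the matrices `φ (E_ii) - φ 0` are `n` nonzero orthogonal
idempotents of `M_n(ℂ)`. Hence they are simultaneously conjugate to the matrix units `E_ii`,
they sum to `1`, and `φ 0 = 0`. After this conjugation the map `ψ` fixes every `E_ii`, so
compressing by `E_pp · E_qq` shows `ψ(X)_pq = f_pq(X_pq)` for `f_pq(a) = ψ(a E_pq)_pq`, and
multiplicativity gives `f_ij(a) f_jk(b) = f_ik(ab)`. Thus `g = f(1)` is transitive,
`f_ij = g_ij · f_ii`, and `f_ii = f_jj` along `ρ`. For `k ≠ l` the identity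
`(E_kk + a E_kl)(b E_kl + E_ll) = (a + b) E_kl` makes `f_kl`, hence `f_kk`, additive; so `f_ii`
is a ring endomorphism as soon as the central class of `i` has a second element.
-/

open Matrix

theorem OrthogonalIdempotents.sub_of_absorbing {R ι : Type*} [Ring R] {P : ι → R} {z : R}
    (hidem : ∀ i, IsIdempotentElem (P i)) (hortho : ∀ i j, i ≠ j → P i * P j = z)
    (hzP : ∀ i, z * P i = z) (hPz : ∀ i, P i * z = z) (hz : z * z = z) :
    OrthogonalIdempotents (fun i => P i - z) where
  idem i := by
    simp only [IsIdempotentElem, sub_mul, mul_sub, (hidem i).eq, hzP, hPz, hz, sub_self, sub_zero]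
  ortho i j hij := by
    simp only [sub_mul, mul_sub, hortho i j hij, hzP, hPz, hz, sub_self]

namespace Matrix

variable {ι K : Type*} [Fintype ι] [DecidableEq ι] [Field K]

theorem exists_isUnit_eq_conj_single_of_orthogonalIdempotents {Q : ι → Matrix ι ι K}
    (hQ : OrthogonalIdempotents Q) (hne : ∀ i, Q i ≠ 0) :
    ∃ T : Matrix ι ι K, IsUnit T ∧ ∀ i, Q i = T * single i i 1 * T⁻¹ := by
  have hrange : ∀ i, ∃ x, Q i *ᵥ x ≠ 0 := fun i => by
    by_contra! h
    exact hne i (ext fun p q => by simpa using congrFun (h (Pi.single q 1)) p)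
  choose x hx using hrange
  set v : ι → ι → K := fun i => Q i *ᵥ x i
  have hQv : ∀ i j, Q i *ᵥ v j = if i = j then v j else 0 := fun i j => by
    simp only [v, mulVec_mulVec, hQ.mul_eq]
    split_ifs with h <;> simp [h]
  set T : Matrix ι ι K := of fun p i => v i p
  have hT : IsUnit T := by
    rw [← linearIndependent_cols_iff_isUnit, Fintype.linearIndependent_iff]
    intro c hc j
    have := congrArg (Q j *ᵥ ·) (show ∑ i, c i • v i = 0 from hc)
    simp only [mulVec_zero, mulVec_sum, mulVec_smul, hQv, smul_ite, smul_zero,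
      Finset.sum_ite_eq, Finset.mem_univ, if_true] at this
    exact (smul_eq_zero.1 this).resolve_right (hx j)
  have hQT : ∀ i, Q i * T = T * single i i 1 := fun i => by
    ext p j
    change (Q i *ᵥ v j) p = _
    rw [hQv]
    rcases eq_or_ne i j with rfl | h <;> simp [T, Ne.symm, *]
  refine ⟨T, hT, fun i => ?_⟩
  rw [← hQT, mul_nonsing_inv_cancel_right _ _ ((isUnit_iff_isUnit_det T).1 hT)]

theorem sum_eq_one_of_orthogonalIdempotents {Q : ι → Matrix ι ι K}
    (hQ : OrthogonalIdempotents Q) (hne : ∀ i, Q i ≠ 0) : ∑ i, Q i = 1 := by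
  obtain ⟨T, hT, hQT⟩ := exists_isUnit_eq_conj_single_of_orthogonalIdempotents hQ hne
  simp_rw [hQT, ← Finset.sum_mul, ← Finset.mul_sum, sum_single_one, Matrix.mul_one]
  exact mul_nonsing_inv T ((isUnit_iff_isUnit_det T).1 hT)

end Matrix

section StructuralMatrixAlgebra

variable {n : ℕ} {ρ : Fin n → Fin n → Prop}

theorem zero_mem_structuralMatrixAlgebra :
    (0 : Matrix (Fin n) (Fin n) ℂ) ∈ structuralMatrixAlgebra ρ :=
  fun _ _ _ => rfl

theorem single_mem_structuralMatrixAlgebra_s18 {i j : Fin n} (hij : ρ i j) (a : ℂ) :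
    single i j a ∈ structuralMatrixAlgebra ρ := fun _ _ hpq =>
  single_apply_of_ne _ _ _ _ _ fun ⟨hp, hq⟩ => hpq (hp ▸ hq ▸ hij)

theorem add_mem_structuralMatrixAlgebra {X Y : Matrix (Fin n) (Fin n) ℂ}
    (hX : X ∈ structuralMatrixAlgebra ρ) (hY : Y ∈ structuralMatrixAlgebra ρ) :
    X + Y ∈ structuralMatrixAlgebra ρ := fun p q hpq => by
  rw [Matrix.add_apply, hX p q hpq, hY p q hpq, add_zero]

theorem mul_mem_structuralMatrixAlgebra [IsTrans (Fin n) ρ] {X Y : Matrix (Fin n) (Fin n) ℂ}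
    (hX : X ∈ structuralMatrixAlgebra ρ) (hY : Y ∈ structuralMatrixAlgebra ρ) :
    X * Y ∈ structuralMatrixAlgebra ρ := fun p q hpq => by
  rw [mul_apply]
  refine Finset.sum_eq_zero fun k _ => ?_
  by_cases hpk : ρ p k
  · rw [hY k q fun hkq => hpq (trans_of ρ hpk hkq), mul_zero]
  · rw [hX p k hpk, zero_mul]

end StructuralMatrixAlgebra

structure IsNormalizedMulMap {n : ℕ} (ρ : Fin n → Fin n → Prop)
    (ψ : Matrix (Fin n) (Fin n) ℂ → Matrix (Fin n) (Fin n) ℂ) : Prop where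
  map_mul : ∀ X ∈ structuralMatrixAlgebra ρ, ∀ Y ∈ structuralMatrixAlgebra ρ,
    ψ (X * Y) = ψ X * ψ Y
  map_zero : ψ 0 = 0
  map_single_diag : ∀ i, ψ (single i i 1) = single i i 1

def entryFun {n : ℕ} (ψ : Matrix (Fin n) (Fin n) ℂ → Matrix (Fin n) (Fin n) ℂ)
    (p q : Fin n) (a : ℂ) : ℂ :=
  ψ (single p q a) p q

namespace IsNormalizedMulMap

variable {n : ℕ} {ρ : Fin n → Fin n → Prop}
  {ψ : Matrix (Fin n) (Fin n) ℂ → Matrix (Fin n) (Fin n) ℂ}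

theorem entryFun_zero (hψ : IsNormalizedMulMap ρ ψ) (p q : Fin n) : entryFun ψ p q 0 = 0 := by
  simp [entryFun, hψ.map_zero]

theorem entryFun_diag_one (hψ : IsNormalizedMulMap ρ ψ) (i : Fin n) : entryFun ψ i i 1 = 1 := by
  simp [entryFun, hψ.map_single_diag]

variable [IsPreorder (Fin n) ρ]

theorem apply_eq_entryFun (hψ : IsNormalizedMulMap ρ ψ) {X : Matrix (Fin n) (Fin n) ℂ}
    (hX : X ∈ structuralMatrixAlgebra ρ) (p q : Fin n) :
    ψ X p q = entryFun ψ p q (X p q) := by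
  have hdiag := fun i => single_mem_structuralMatrixAlgebra_s18 (refl_of ρ i) (1 : ℂ)
  have hcorner : ψ (single p q (X p q)) = single p p 1 * ψ X * single q q 1 := by
    rw [show single p q (X p q) = single p p 1 * X * single q q 1 by simp, mul_assoc,
      hψ.map_mul _ (hdiag p) _ (mul_mem_structuralMatrixAlgebra hX (hdiag q)),
      hψ.map_mul _ hX _ (hdiag q), hψ.map_single_diag, hψ.map_single_diag, ← mul_assoc]
  simp [entryFun, hcorner]

theorem map_single (hψ : IsNormalizedMulMap ρ ψ) {p q : Fin n} (hpq : ρ p q) (a : ℂ) :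
    ψ (single p q a) = single p q (entryFun ψ p q a) := by
  ext c d
  rw [hψ.apply_eq_entryFun (single_mem_structuralMatrixAlgebra_s18 hpq a)]
  by_cases h : p = c ∧ q = d
  · obtain ⟨rfl, rfl⟩ := h
    simp
  · rw [single_apply_of_ne _ _ _ _ _ h, single_apply_of_ne _ _ _ _ _ h, hψ.entryFun_zero]

theorem entryFun_mul (hψ : IsNormalizedMulMap ρ ψ) {i j k : Fin n} (hij : ρ i j) (hjk : ρ j k)
    (a b : ℂ) : entryFun ψ i j a * entryFun ψ j k b = entryFun ψ i k (a * b) := by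
  have := hψ.map_mul _ (single_mem_structuralMatrixAlgebra_s18 hij a) _
    (single_mem_structuralMatrixAlgebra_s18 hjk b)
  rw [single_mul_single_same, hψ.map_single (trans_of ρ hij hjk), hψ.map_single hij,
    hψ.map_single hjk, single_mul_single_same] at this
  simpa using (congrFun₂ this i k).symm

theorem entryFun_injective (hψ : IsNormalizedMulMap ρ ψ)
    (hinj : Set.InjOn ψ (structuralMatrixAlgebra ρ)) {i j : Fin n} (hij : ρ i j) :
    Function.Injective (entryFun ψ i j) := fun a b hab => by
  have := hinj (single_mem_structuralMatrixAlgebra_s18 hij a) (single_mem_structuralMatrixAlgebra_s18 hij b)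
    (by rw [hψ.map_single hij, hψ.map_single hij, hab])
  simpa using congrFun₂ this i j

theorem map_single_add_single (hψ : IsNormalizedMulMap ρ ψ)
    {p q r s : Fin n} (hpq : ρ p q) (hrs : ρ r s) (hne : (p, q) ≠ (r, s)) (a b : ℂ) :
    ψ (single p q a + single r s b) =
      single p q (entryFun ψ p q a) + single r s (entryFun ψ r s b) := by
  ext c d
  rw [hψ.apply_eq_entryFun (add_mem_structuralMatrixAlgebra
    (single_mem_structuralMatrixAlgebra_s18 hpq a) (single_mem_structuralMatrixAlgebra_s18 hrs b))]
  simp only [Matrix.add_apply, single_apply]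
  split_ifs with hpq' hrs' hrs'
  · exact absurd (by rw [hpq'.1, hpq'.2, hrs'.1, hrs'.2]) hne
  · obtain ⟨rfl, rfl⟩ := hpq'
    simp
  · obtain ⟨rfl, rfl⟩ := hrs'
    simp
  · simp [hψ.entryFun_zero]

theorem entryFun_add_of_ne (hψ : IsNormalizedMulMap ρ ψ) {k l : Fin n}
    (hkl : ρ k l) (hne : k ≠ l) (a b : ℂ) :
    entryFun ψ k l (a + b) = entryFun ψ k l a + entryFun ψ k l b := by
  have hX := add_mem_structuralMatrixAlgebra (single_mem_structuralMatrixAlgebra_s18 (refl_of ρ k) 1)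
    (single_mem_structuralMatrixAlgebra_s18 hkl a)
  have hY := add_mem_structuralMatrixAlgebra (single_mem_structuralMatrixAlgebra_s18 hkl b)
    (single_mem_structuralMatrixAlgebra_s18 (refl_of ρ l) 1)
  have hXY :
      (single k k 1 + single k l a) * (single k l b + single l l 1) = single k l (a + b) := by
    simp [add_mul, mul_add, hne, hne.symm, ← single_add, add_comm]
  have := hψ.map_mul _ hX _ hY
  rw [hXY, hψ.map_single hkl, hψ.map_single_add_single (refl_of ρ k) hkl (by simp [hne]),
    hψ.map_single_add_single hkl (refl_of ρ l) (by simp [hne]), hψ.entryFun_diag_one,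
    hψ.entryFun_diag_one] at this
  simpa [add_mul, mul_add, hne, hne.symm, add_comm] using congrFun₂ this k l

theorem entryFun_eq_diag_mul (hψ : IsNormalizedMulMap ρ ψ) {i j : Fin n}
    (hij : ρ i j) (a : ℂ) : entryFun ψ i j a = entryFun ψ i i a * entryFun ψ i j 1 := by
  rw [hψ.entryFun_mul (refl_of ρ i) hij, mul_one]

theorem entryFun_eq_mul_diag (hψ : IsNormalizedMulMap ρ ψ) {i j : Fin n}
    (hij : ρ i j) (a : ℂ) : entryFun ψ i j a = entryFun ψ i j 1 * entryFun ψ j j a := by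
  rw [hψ.entryFun_mul hij (refl_of ρ j), one_mul]

theorem entryFun_one_ne_zero (hψ : IsNormalizedMulMap ρ ψ)
    (hinj : Set.InjOn ψ (structuralMatrixAlgebra ρ)) {i j : Fin n} (hij : ρ i j) :
    entryFun ψ i j 1 ≠ 0 := by
  rw [← hψ.entryFun_zero i j]
  exact (hψ.entryFun_injective hinj hij).ne one_ne_zero

theorem entryFun_diag_eq_of_rel (hψ : IsNormalizedMulMap ρ ψ)
    (hinj : Set.InjOn ψ (structuralMatrixAlgebra ρ)) {i j : Fin n} (hij : ρ i j) :
    entryFun ψ i i = entryFun ψ j j := funext fun a =>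
  mul_right_cancel₀ (hψ.entryFun_one_ne_zero hinj hij) <| by
    rw [← hψ.entryFun_eq_diag_mul hij, hψ.entryFun_eq_mul_diag hij, mul_comm]

theorem entryFun_diag_eq_of_centralRel (hψ : IsNormalizedMulMap ρ ψ)
    (hinj : Set.InjOn ψ (structuralMatrixAlgebra ρ)) {i j : Fin n} (h : centralRel ρ i j) :
    entryFun ψ i i = entryFun ψ j j := by
  induction h with
  | refl => rfl
  | tail _ hstep ih =>
    rcases hstep with h | h
    · exact ih.trans (hψ.entryFun_diag_eq_of_rel hinj h)
    · exact ih.trans (hψ.entryFun_diag_eq_of_rel hinj h).symm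

theorem entryFun_diag_add_of_rel (hψ : IsNormalizedMulMap ρ ψ)
    (hinj : Set.InjOn ψ (structuralMatrixAlgebra ρ)) {i j : Fin n} (hij : ρ i j ∨ ρ j i)
    (hne : i ≠ j) (a b : ℂ) :
    entryFun ψ i i (a + b) = entryFun ψ i i a + entryFun ψ i i b := by
  rcases hij with hij | hji
  · apply mul_right_cancel₀ (hψ.entryFun_one_ne_zero hinj hij)
    rw [← hψ.entryFun_eq_diag_mul hij, add_mul, ← hψ.entryFun_eq_diag_mul hij,
      ← hψ.entryFun_eq_diag_mul hij, hψ.entryFun_add_of_ne hij hne]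
  · apply mul_left_cancel₀ (hψ.entryFun_one_ne_zero hinj hji)
    rw [← hψ.entryFun_eq_mul_diag hji, mul_add, ← hψ.entryFun_eq_mul_diag hji,
      ← hψ.entryFun_eq_mul_diag hji, hψ.entryFun_add_of_ne hji hne.symm]

theorem entryFun_diag_add_of_centralRel (hψ : IsNormalizedMulMap ρ ψ)
    (hinj : Set.InjOn ψ (structuralMatrixAlgebra ρ)) {i j : Fin n} (h : centralRel ρ i j)
    (hne : i ≠ j) (a b : ℂ) :
    entryFun ψ i i (a + b) = entryFun ψ i i a + entryFun ψ i i b := by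
  induction h using Relation.ReflTransGen.head_induction_on with
  | refl => exact absurd rfl hne
  | @head i k hstep _ ih =>
    rcases eq_or_ne i k with rfl | hik
    · exact ih hne
    · exact hψ.entryFun_diag_add_of_rel hinj hstep hik a b

def diagRingHom (hψ : IsNormalizedMulMap ρ ψ) (i : Fin n)
    (hadd : ∀ a b, entryFun ψ i i (a + b) = entryFun ψ i i a + entryFun ψ i i b) :
    ℂ →+* ℂ where
  toFun := entryFun ψ i i
  map_one' := hψ.entryFun_diag_one i
  map_mul' a b := (hψ.entryFun_mul (refl_of ρ i) (refl_of ρ i) a b).symm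
  map_zero' := hψ.entryFun_zero i i
  map_add' := hadd

theorem exists_weight_ringHom [DecidableRel ρ] (hψ : IsNormalizedMulMap ρ ψ)
    (hinj : Set.InjOn ψ (structuralMatrixAlgebra ρ))
    (hclass : ∀ i : Fin n, ∃ j, j ≠ i ∧ centralRel ρ i j) :
    ∃ g : Fin n → Fin n → ℂ,
      (∀ i j, ρ i j → g i j ≠ 0) ∧
      (∀ i j k, ρ i j → ρ j k → g i j * g j k = g i k) ∧
    ∃ ω : Fin n → (ℂ →+* ℂ),
      (∀ i, Function.Injective (ω i)) ∧
      (∀ i j, centralRel ρ i j → ω i = ω j) ∧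
      ∀ X ∈ structuralMatrixAlgebra ρ,
        ψ X = Matrix.of fun i j => if ρ i j then g i j * ω i (X i j) else 0 := by
  have hadd i : ∀ a b, entryFun ψ i i (a + b) = entryFun ψ i i a + entryFun ψ i i b :=
    let ⟨_, hne, hij⟩ := hclass i
    hψ.entryFun_diag_add_of_centralRel hinj hij hne.symm
  refine ⟨fun i j => entryFun ψ i j 1, fun _ _ => hψ.entryFun_one_ne_zero hinj,
    fun _ _ _ hij hjk => by rw [hψ.entryFun_mul hij hjk, one_mul],
    fun i => hψ.diagRingHom i (hadd i), fun i => hψ.entryFun_injective hinj (refl_of ρ i),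
    fun _ _ h => RingHom.ext (congrFun (hψ.entryFun_diag_eq_of_centralRel hinj h)),
    fun X hX => ?_⟩
  ext i j
  rw [hψ.apply_eq_entryFun hX, of_apply]
  split_ifs with hij
  · exact (hψ.entryFun_eq_diag_mul hij _).trans (mul_comm _ _)
  · rw [hX i j hij, hψ.entryFun_zero]

end IsNormalizedMulMap

theorem exists_isUnit_isNormalizedMulMap_conj {n : ℕ} {ρ : Fin n → Fin n → Prop}
    [IsPreorder (Fin n) ρ] {φ : Matrix (Fin n) (Fin n) ℂ → Matrix (Fin n) (Fin n) ℂ}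
    (hinj : Set.InjOn φ (structuralMatrixAlgebra ρ))
    (hmul : ∀ X ∈ structuralMatrixAlgebra ρ, ∀ Y ∈ structuralMatrixAlgebra ρ,
      φ (X * Y) = φ X * φ Y) :
    ∃ T : Matrix (Fin n) (Fin n) ℂ, IsUnit T ∧
      IsNormalizedMulMap ρ (fun X => T⁻¹ * φ X * T) := by
  have hA0 := zero_mem_structuralMatrixAlgebra (ρ := ρ)
  have hAE i := single_mem_structuralMatrixAlgebra_s18 (refl_of ρ i) (1 : ℂ)
  have hzl : ∀ X ∈ structuralMatrixAlgebra ρ, φ 0 * φ X = φ 0 := fun X hX => by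
    rw [← hmul 0 hA0 X hX, zero_mul]
  have hzr : ∀ X ∈ structuralMatrixAlgebra ρ, φ X * φ 0 = φ 0 := fun X hX => by
    rw [← hmul X hX 0 hA0, mul_zero]
  set Q := fun i => φ (single i i 1) - φ 0
  have hQ : OrthogonalIdempotents Q := .sub_of_absorbing
    (fun i => by
      rw [IsIdempotentElem, ← hmul _ (hAE i) _ (hAE i), single_mul_single_same, mul_one])
    (fun i j hij => by rw [← hmul _ (hAE i) _ (hAE j), single_mul_single_of_ne (h := hij)])
    (fun i => hzl _ (hAE i)) (fun i => hzr _ (hAE i)) (hzl 0 hA0)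
  have hQne : ∀ i, Q i ≠ 0 := fun i h => by
    simpa using congrFun₂ (hinj (hAE i) hA0 (sub_eq_zero.1 h)) i i
  have hz : φ 0 = 0 := calc
    φ 0 = φ 0 * ∑ i, Q i := by rw [sum_eq_one_of_orthogonalIdempotents hQ hQne, mul_one]
    _ = 0 := by
      rw [Finset.mul_sum]
      exact Finset.sum_eq_zero fun i _ => by rw [mul_sub, hzl _ (hAE i), hzl 0 hA0, sub_self]
  obtain ⟨T, hT, hQT⟩ := exists_isUnit_eq_conj_single_of_orthogonalIdempotents hQ hQne
  have hdet := (isUnit_iff_isUnit_det T).1 hT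
  refine ⟨T, hT, fun X hX Y hY => ?_, by simp [hz], fun i => ?_⟩
  · simp [hmul X hX Y hY, mul_assoc, mul_nonsing_inv_cancel_left _ _ hdet]
  · have : φ (single i i 1) = Q i := by simp [Q, hz]
    simp [this, hQT, mul_assoc, nonsing_inv_mul_cancel_left _ _ hdet, nonsing_inv_mul _ hdet]

/-- Structure of injective multiplicative maps `φ : A_ρ → M_n(ℂ)` when
every central class has at least 2 elements: there exist an invertible `T`, a
transitive map `g : ρ → ℂ^×`, and injective ring endomorphisms `ω_C` of `ℂ` (one for
each central class) such that `φ(X) = T M T⁻¹` where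
`M i j = g i j · ω_{C(i)}(X i j)` for `(i,j) ∈ ρ` and `M i j = 0` otherwise. -/
theorem multiplicative_map_structure {n : ℕ} (ρ : Fin n → Fin n → Prop)
    [DecidableRel ρ]
    (hrefl : ∀ i, ρ i i) (htrans : ∀ i j k, ρ i j → ρ j k → ρ i k)
    (hclass : ∀ i : Fin n, ∃ j, j ≠ i ∧ centralRel ρ i j)
    (φ : Matrix (Fin n) (Fin n) ℂ → Matrix (Fin n) (Fin n) ℂ)
    (hinj : Set.InjOn φ (structuralMatrixAlgebra ρ))
    (hmul : ∀ X ∈ structuralMatrixAlgebra ρ, ∀ Y ∈ structuralMatrixAlgebra ρ,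
      φ (X * Y) = φ X * φ Y) :
    ∃ T : Matrix (Fin n) (Fin n) ℂ, IsUnit T ∧
    ∃ g : Fin n → Fin n → ℂ,
      (∀ i j, ρ i j → g i j ≠ 0) ∧
      (∀ i j k, ρ i j → ρ j k → g i j * g j k = g i k) ∧
    ∃ ω : Fin n → (ℂ →+* ℂ),
      (∀ i, Function.Injective (ω i)) ∧
      (∀ i j, centralRel ρ i j → ω i = ω j) ∧
      ∀ X ∈ structuralMatrixAlgebra ρ,
        φ X = T * (Matrix.of fun i j =>
          if ρ i j then g i j * ω i (X i j) else 0) * T⁻¹ := by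
  have : IsPreorder (Fin n) ρ := { refl := hrefl, trans := htrans }
  obtain ⟨T, hT, hψ⟩ := exists_isUnit_isNormalizedMulMap_conj hinj hmul
  have hdet := (isUnit_iff_isUnit_det T).1 hT
  have hconj X : T * (T⁻¹ * φ X * T) * T⁻¹ = φ X := by
    simp [mul_assoc, mul_nonsing_inv_cancel_left _ _ hdet, mul_nonsing_inv _ hdet]
  have hψinj : Set.InjOn (fun X => T⁻¹ * φ X * T) (structuralMatrixAlgebra ρ) :=
    fun X hX Y hY h => hinj hX hY <| by
      rw [← hconj X, ← hconj Y]
      exact congrArg (T * · * T⁻¹) h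
  obtain ⟨g, hg, hgtrans, ω, hωinj, hωclass, hψX⟩ := hψ.exists_weight_ringHom hψinj hclass
  exact ⟨T, hT, g, hg, hgtrans, ω, hωinj, hωclass, fun X hX => by rw [← hψX X hX, hconj]⟩
end
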